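/- arXiv:1910.08714 — 4 statements merged into one kernel-verified Lean document; each statement's English description precedes it below -/
import Mathlib

section
/- Let B ∈ ℂ^{n×(n+m)} with B B* = I and let ℬ = [Re(B); Im(B)] ∈ ℝ^{2n×(n+m)} with singular values σ₁ ≥ ⋯ ≥ σ_{2n}. Then for each i = 1,…,n, σ_i² + σ_{2n+1-i}² = 1. In particular σ₁ ≤ 1. -/
open Matrix

section StmtElevenAux

lemma stmt11_antitone_eq_of_multiset {N : ℕ} (t u : Fin N → ℝ) (ht : Antitone t)
    (hu : Antitone u)
    (h : Multiset.map t Finset.univ.val = Multiset.map u Finset.univ.val) : t = u := by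
  have hperm : (List.ofFn t).Perm (List.ofFn u) := by
    rw [← Multiset.coe_eq_coe]
    simpa [Fin.univ_val_map] using h
  have hst : (List.ofFn t).Pairwise (· ≥ ·) := by
    rw [List.pairwise_ofFn]
    exact fun i j hij => ht hij.le
  have hsu : (List.ofFn u).Pairwise (· ≥ ·) := by
    rw [List.pairwise_ofFn]
    exact fun i j hij => hu hij.le
  exact List.ofFn_injective (List.Perm.eq_of_pairwise' hst hsu hperm)

lemma stmt11_conj_diag_det {N : Type*} [Fintype N] [DecidableEq N] (U : Matrix N N ℝ)
    (hU : U * star U = 1) (f : N → ℝ) :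
    det (U * diagonal f * star U) = ∏ i, f i := by
  rw [det_mul, det_mul, mul_right_comm, ← det_mul, hU]
  simp

lemma stmt11_diag_sub {N : Type*} [DecidableEq N] (x : ℝ) (f : N → ℝ) :
    diagonal (fun i => x - f i) = diagonal (fun _ => x) - diagonal f := by
  rw [← diagonal_sub]

lemma stmt11_herm_det_eq {N : Type*} [Fintype N] [DecidableEq N] {A : Matrix N N ℝ}
    (hA : A.IsHermitian) (x : ℝ) :
    det (x • (1 : Matrix N N ℝ) - A) = ∏ i, (x - hA.eigenvalues i) ∧
    det (x • (1 : Matrix N N ℝ) - (1 - A)) = ∏ i, (x - (1 - hA.eigenvalues i)) := by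
  set U := (hA.eigenvectorUnitary : Matrix N N ℝ) with hUdef
  have hU : U * star U = 1 := Matrix.mem_unitaryGroup_iff.mp hA.eigenvectorUnitary.2
  have hspec : A = U * diagonal hA.eigenvalues * star U := by
    simpa using hA.spectral_theorem
  have hone : ∀ c : ℝ, c • (1 : Matrix N N ℝ) = U * diagonal (fun _ => c) * star U := by
    intro c
    rw [← smul_one_eq_diagonal, Matrix.mul_smul, Matrix.smul_mul, mul_one, hU]
  constructor
  · have key : x • (1 : Matrix N N ℝ) - A
        = U * diagonal (fun i => x - hA.eigenvalues i) * star U := by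
      rw [stmt11_diag_sub, Matrix.mul_sub, Matrix.sub_mul, ← hone x, ← hspec]
    rw [key, stmt11_conj_diag_det U hU]
  · have key : x • (1 : Matrix N N ℝ) - (1 - A)
        = U * diagonal (fun i => x - (1 - hA.eigenvalues i)) * star U := by
      have h1 : (fun i => x - (1 - hA.eigenvalues i))
          = fun i => (x - 1) + hA.eigenvalues i := by funext i; ring
      have h2 : (diagonal fun i => (x - 1) + hA.eigenvalues i)
          = diagonal (fun _ => (x - 1)) + diagonal hA.eigenvalues := by
        rw [← diagonal_add]
      rw [h1, h2, Matrix.mul_add, Matrix.add_mul, ← hone (x - 1), ← hspec,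
        sub_smul, one_smul]
      abel
    rw [key, stmt11_conj_diag_det U hU]

lemma stmt11_fromBlocks_sub {l m n o R : Type*} [SubtractionMonoid R]
    (A : Matrix n l R) (B : Matrix n m R) (C : Matrix o l R) (D : Matrix o m R)
    (A' : Matrix n l R) (B' : Matrix n m R) (C' : Matrix o l R) (D' : Matrix o m R) :
    fromBlocks A B C D - fromBlocks A' B' C' D'
      = fromBlocks (A - A') (B - B') (C - C') (D - D') := by
  ext (i | i) (j | j) <;> simp [fromBlocks]

lemma stmt11_simLemma (n k : ℕ) (X Y : Matrix (Fin n) (Fin k) ℝ)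
    (h1 : X * Xᴴ + Y * Yᴴ = 1) (h2 : Y * Xᴴ = X * Yᴴ)
    (J : Matrix (Fin n ⊕ Fin n) (Fin n ⊕ Fin n) ℝ) (hJ : J = fromBlocks 0 (-1) 1 0) :
    J * ((fromRows X Y) * (fromRows X Y)ᴴ) * star J = 1 - (fromRows X Y) * (fromRows X Y)ᴴ ∧
    J * star J = 1 := by
  have hG : (fromRows X Y) * (fromRows X Y)ᴴ
      = fromBlocks (X * Xᴴ) (X * Yᴴ) (Y * Xᴴ) (Y * Yᴴ) := by
    rw [conjTranspose_fromRows_eq_fromCols_conjTranspose, fromRows_mul_fromCols]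
  have hsJ : star J = fromBlocks 0 1 (-1) 0 := by
    rw [hJ]
    ext (i | i) (j | j) <;>
      simp [Matrix.star_eq_conjTranspose, conjTranspose_apply, fromBlocks, Matrix.one_apply,
        eq_comm]
  constructor
  · rw [hG, hsJ, hJ, fromBlocks_multiply, fromBlocks_multiply, ← fromBlocks_one,
      stmt11_fromBlocks_sub]
    simp only [Matrix.zero_mul, Matrix.mul_zero, Matrix.one_mul, Matrix.mul_one,
      Matrix.neg_mul, Matrix.mul_neg, zero_add, add_zero, neg_neg, zero_sub, neg_zero]
    have e1 : 1 - X * Xᴴ = Y * Yᴴ := by rw [← h1]; abel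
    have e2 : 1 - Y * Yᴴ = X * Xᴴ := by rw [← h1]; abel
    rw [e1, e2, h2]
  · rw [hsJ, hJ, fromBlocks_multiply, ← fromBlocks_one]
    simp

lemma stmt11_multiset_eq_of_prod {ι : Type*} [Fintype ι] (μ ν : ι → ℝ)
    (hprod : ∀ x : ℝ, ∏ i, (x - μ i) = ∏ i, (x - ν i)) :
    Multiset.map μ Finset.univ.val = Multiset.map ν Finset.univ.val := by
  have hP : ((Multiset.map μ Finset.univ.val).map fun a => Polynomial.X - Polynomial.C a).prod
      = ((Multiset.map ν Finset.univ.val).map fun a => Polynomial.X - Polynomial.C a).prod := by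
    apply Polynomial.funext
    intro x
    simp only [Polynomial.eval_multiset_prod, Multiset.map_map, Function.comp_def,
      Polynomial.eval_sub, Polynomial.eval_X, Polynomial.eval_C]
    rw [← Finset.prod_eq_multiset_prod, ← Finset.prod_eq_multiset_prod]
    exact hprod x
  have := congrArg Polynomial.roots hP
  rwa [Polynomial.roots_multiset_prod_X_sub_C, Polynomial.roots_multiset_prod_X_sub_C] at this

end StmtElevenAux

/-- Let `B B* = I` and let `ℬ = [Re B; Im B]` be the real form of `B`, with singular values
`σ₁ ≥ ⋯ ≥ σ_{2n}` (so `σ i ^ 2` enumerates the eigenvalues of `ℬ ℬ*`). Then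
`σ_i² + σ_{2n+1-i}² = 1` for `i = 1,…,n`; in particular all `σ_i ≤ 1`. -/
theorem stmt11 (n m : ℕ) (B : Matrix (Fin n) (Fin (n + m)) ℂ) (hB : B * Bᴴ = 1)
    (calB : Matrix (Fin n ⊕ Fin n) (Fin (n + m)) ℝ)
    (hcalB : calB = Matrix.fromRows (B.map Complex.re) (B.map Complex.im))
    (σ : Fin (2 * n) → ℝ) (hmono : Antitone σ) (hnn : ∀ i, 0 ≤ σ i)
    (hσ : ∃ e : Fin (2 * n) ≃ (Fin n ⊕ Fin n), ∀ i,
      σ i ^ 2 = (Matrix.isHermitian_mul_conjTranspose_self calB).eigenvalues (e i)) :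
    (∀ i : Fin (2 * n), i.val < n →
      σ i ^ 2 + σ ⟨2 * n - 1 - i.val, by have := i.isLt; omega⟩ ^ 2 = 1) ∧
    ∀ i, σ i ≤ 1 := by
  obtain ⟨e, he⟩ := hσ
  set μ := (Matrix.isHermitian_mul_conjTranspose_self calB).eigenvalues with hμdef
  set X := B.map Complex.re with hX
  set Y := B.map Complex.im with hY
  -- real and imaginary parts of B B* = 1
  have h1 : X * Xᴴ + Y * Yᴴ = 1 := by
    ext i j
    have h := congrArg (fun M => (M i j).re) hB
    simp [hX, hY, Matrix.mul_apply, Matrix.one_apply, Complex.mul_re, Finset.sum_add_distrib,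
      apply_ite Complex.re] at h ⊢
    convert h using 2 <;> ring_nf
  have h2 : Y * Xᴴ = X * Yᴴ := by
    ext i j
    have h := congrArg (fun M => (M i j).im) hB
    simp [hX, hY, Matrix.mul_apply, Matrix.one_apply, Complex.mul_im,
      apply_ite Complex.im] at h ⊢
    have h2' : (∑ x, (B i x).im * (B j x).re) - (∑ x, (B i x).re * (B j x).im) = 0 := by
      rw [← Finset.sum_sub_distrib]
      simpa [sub_eq_neg_add] using h
    linarith
  obtain ⟨hsim, hJ1⟩ := stmt11_simLemma n (n + m) X Y h1 h2 (fromBlocks 0 (-1) 1 0) rfl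
  rw [← hcalB] at hsim
  set J : Matrix (Fin n ⊕ Fin n) (Fin n ⊕ Fin n) ℝ := fromBlocks 0 (-1) 1 0 with hJdef
  -- the characteristic products agree
  have hprod : ∀ x : ℝ, ∏ i, (x - μ i) = ∏ i, (x - (1 - μ i)) := by
    intro x
    have H := stmt11_herm_det_eq (Matrix.isHermitian_mul_conjTranspose_self calB) x
    rw [← H.1, ← H.2, ← hsim]
    have hkey : x • (1 : Matrix (Fin n ⊕ Fin n) (Fin n ⊕ Fin n) ℝ)
        - J * (calB * calBᴴ) * star J = J * (x • 1 - calB * calBᴴ) * star J := by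
      rw [Matrix.mul_sub, Matrix.sub_mul]
      congr 1
      rw [Matrix.mul_smul, Matrix.smul_mul, mul_one, hJ1]
    rw [hkey, det_mul, det_mul, mul_right_comm, ← det_mul, hJ1]
    simp
  have hms : Multiset.map μ Finset.univ.val
      = Multiset.map (fun i => 1 - μ i) Finset.univ.val :=
    stmt11_multiset_eq_of_prod _ _ hprod
  set t : Fin (2 * n) → ℝ := fun i => σ i ^ 2 with htdef
  have ht : Antitone t := fun i j hij => pow_le_pow_left₀ (hnn j) (hmono hij) 2
  set u : Fin (2 * n) → ℝ := fun i => 1 - t (Fin.rev i) with hudef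
  have hu : Antitone u := by
    intro i j hij
    have hr : Fin.rev j ≤ Fin.rev i := by
      rw [Fin.rev_le_rev]
      exact hij
    have : t (Fin.rev i) ≤ t (Fin.rev j) := ht hr
    simp only [hudef]
    linarith
  -- multiset bookkeeping
  have hbije : Multiset.map (⇑e) Finset.univ.val = Finset.univ.val := by
    simpa using congrArg Finset.val (Finset.map_univ_equiv e)
  have hbijr : Multiset.map (Fin.rev : Fin (2 * n) → Fin (2 * n)) Finset.univ.val
      = Finset.univ.val := by
    have h := congrArg Finset.val (Finset.map_univ_equiv (Fin.revPerm : Equiv.Perm (Fin (2 * n))))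
    rwa [Finset.map_val, Equiv.coe_toEmbedding,
      show ⇑(Fin.revPerm : Equiv.Perm (Fin (2 * n))) = Fin.rev from funext fun i => Fin.revPerm_apply i] at h
  have hmt : Multiset.map t Finset.univ.val = Multiset.map μ Finset.univ.val := by
    have : t = μ ∘ e := funext he
    rw [this, ← Multiset.map_map, hbije]
  have hmu : Multiset.map u Finset.univ.val
      = Multiset.map (fun i => 1 - μ i) Finset.univ.val := by
    have h1' : u = (fun i => 1 - t i) ∘ Fin.rev := rfl
    have h2' : (fun i : Fin (2 * n) => 1 - t i) = (fun a : ℝ => 1 - a) ∘ t := rfl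
    rw [h1', ← Multiset.map_map, hbijr, h2', ← Multiset.map_map, hmt, Multiset.map_map]
    rfl
  have hteq : t = u :=
    stmt11_antitone_eq_of_multiset t u ht hu (by rw [hmt, hms, ← hmu])
  have hpair : ∀ i : Fin (2 * n), t i + t (Fin.rev i) = 1 := by
    intro i
    have := congrFun hteq i
    simp only [hudef] at this
    linarith
  constructor
  · intro i hi
    have hrev : (⟨2 * n - 1 - i.val, by have := i.isLt; omega⟩ : Fin (2 * n)) = Fin.rev i := by
      apply Fin.ext
      simp [Fin.rev]
      omega
    rw [hrev]
    exact hpair i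
  · intro i
    have h0 : 0 ≤ t (Fin.rev i) := sq_nonneg _
    have h1' : t i ≤ 1 := by have := hpair i; linarith
    simp only [htdef] at h1'
    nlinarith [hnn i, h1']
end

section
/- Let B ∈ ℂ^{n×(n+m)} with B B* = I, let ℬ = [Re(B); Im(B)] have singular value decomposition with right singular vectors η_k ∈ ℝ^{n+m} and singular values σ_k (k = 1,…,2n), satisfying σ_k² + σ_{2n+1-k}² = 1. Then for each k = 1,…,n: B*B η_k = σ_k(σ_k η_k + i σ_{2n+1-k} η_{2n+1-k}) and B*B η_{2n+1-k} = σ_{2n+1-k}(σ_{2n+1-k} η_{2n+1-k} - i σ_k η_k), where the real vectors η_j are regarded as complex vectors. -/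
open Matrix

lemma stmt12_pull {N : ℕ} (c : ℝ) (f g : Fin N → ℝ) :
    ∑ i, f i * (c * g i) = c * ∑ i, f i * g i := by
  rw [Finset.mul_sum]; exact Finset.sum_congr rfl fun i _ => by ring

lemma stmt12_pulln {N : ℕ} (c : ℝ) (f g : Fin N → ℝ) :
    ∑ i, f i * (c * -g i) = -(c * ∑ i, f i * g i) := by
  rw [Finset.mul_sum, ← Finset.sum_neg_distrib]
  exact Finset.sum_congr rfl fun i _ => by ring

lemma stmt12_aux (n m : ℕ) (B : Matrix (Fin n) (Fin (n + m)) ℂ)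
    (v : Fin (n + m) → ℝ) (a b : Fin n → ℝ) (c d : Fin (n + m) → ℝ)
    (hX : ∀ i, ∑ p, (B i p).re * v p = a i)
    (hY : ∀ i, ∑ p, (B i p).im * v p = b i)
    (hT1 : ∀ j, (∑ i, (B i j).re * a i) + (∑ i, (B i j).im * b i) = c j)
    (hT2 : ∀ j, (∑ i, (B i j).re * b i) - (∑ i, (B i j).im * a i) = d j) :
    (Bᴴ * B).mulVec (fun j => ((v j : ℝ) : ℂ)) =
      fun j => ((c j : ℝ) : ℂ) + Complex.I * ((d j : ℝ) : ℂ) := by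
  funext j
  rw [← Matrix.mulVec_mulVec]
  have hw : B.mulVec (fun p => ((v p : ℝ) : ℂ)) = fun i =>
      ((a i : ℝ) : ℂ) + Complex.I * ((b i : ℝ) : ℂ) := by
    funext i
    apply Complex.ext <;>
      simp [Matrix.mulVec, dotProduct, Complex.re_sum, Complex.im_sum, hX, hY]
  rw [hw]
  apply Complex.ext <;>
    simp [Matrix.mulVec, dotProduct, Complex.re_sum, Complex.im_sum, conjTranspose_apply,
      mul_add, Finset.sum_add_distrib, hT1] <;>
    linarith [hT2 j]

/-- Let `B B* = I`, `ℬ = [Re B; Im B]` with SVD data: right singular vectors `η k`, left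
singular vectors `ξ k`, singular values `σ k` satisfying `ℬ η_k = σ_k ξ_k`,
`ℬᵀ ξ_k = σ_k η_k`, the coupling `σ_k² + σ_{2n+1-k}² = 1` and
`ξ_{2n+1-k} = G(-i G⁻¹(ξ_k))`. Then for `k = 1,…,n`, regarding the real vectors `η` as
complex vectors: `B*B η_k = σ_k (σ_k η_k + i σ_{2n+1-k} η_{2n+1-k})` and
`B*B η_{2n+1-k} = σ_{2n+1-k} (σ_{2n+1-k} η_{2n+1-k} - i σ_k η_k)`. -/
theorem stmt12 (n m : ℕ) (B : Matrix (Fin n) (Fin (n + m)) ℂ) (hB : B * Bᴴ = 1)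
    (calB : Matrix (Fin n ⊕ Fin n) (Fin (n + m)) ℝ)
    (hcalB : calB = Matrix.fromRows (B.map Complex.re) (B.map Complex.im))
    (σ : Fin (2 * n) → ℝ)
    (η : Fin (2 * n) → (Fin (n + m) → ℝ))
    (ξ : Fin (2 * n) → (Fin n ⊕ Fin n → ℝ))
    (hsvd1 : ∀ k, calB.mulVec (η k) = σ k • ξ k)
    (hsvd2 : ∀ k, calBᵀ.mulVec (ξ k) = σ k • η k)
    (hrel : ∀ k l : Fin (2 * n), l.val = 2 * n - 1 - k.val → σ k ^ 2 + σ l ^ 2 = 1)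
    (hcouple : ∀ k l : Fin (2 * n), k.val < n → l.val = 2 * n - 1 - k.val →
      (∀ j, ξ l (Sum.inl j) = ξ k (Sum.inr j)) ∧
      (∀ j, ξ l (Sum.inr j) = - ξ k (Sum.inl j))) :
    ∀ k l : Fin (2 * n), k.val < n → l.val = 2 * n - 1 - k.val →
      ((Bᴴ * B).mulVec (fun j => ((η k j : ℝ) : ℂ)) =
        fun j => (σ k : ℂ) * ((σ k : ℂ) * ((η k j : ℝ) : ℂ) +
          Complex.I * (σ l : ℂ) * ((η l j : ℝ) : ℂ))) ∧
      ((Bᴴ * B).mulVec (fun j => ((η l j : ℝ) : ℂ)) =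
        fun j => (σ l : ℂ) * ((σ l : ℂ) * ((η l j : ℝ) : ℂ) -
          Complex.I * (σ k : ℂ) * ((η k j : ℝ) : ℂ))) := by
  subst hcalB
  intro k l hk hl
  have hX : ∀ (k : Fin (2 * n)) (i : Fin n),
      ∑ p, (B i p).re * η k p = σ k * ξ k (Sum.inl i) := by
    intro k i
    have := congrFun (hsvd1 k) (Sum.inl i)
    simpa [Matrix.mulVec, dotProduct, Matrix.fromRows_apply_inl, Matrix.fromRows_apply_inr, Matrix.map] using this
  have hY : ∀ (k : Fin (2 * n)) (i : Fin n),
      ∑ p, (B i p).im * η k p = σ k * ξ k (Sum.inr i) := by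
    intro k i
    have := congrFun (hsvd1 k) (Sum.inr i)
    simpa [Matrix.mulVec, dotProduct, Matrix.fromRows_apply_inl, Matrix.fromRows_apply_inr, Matrix.map] using this
  have hT : ∀ (k : Fin (2 * n)) (j : Fin (n + m)),
      (∑ i, (B i j).re * ξ k (Sum.inl i)) + (∑ i, (B i j).im * ξ k (Sum.inr i))
        = σ k * η k j := by
    intro k j
    have := congrFun (hsvd2 k) j
    simpa [Matrix.mulVec, dotProduct, Matrix.transpose_apply, Matrix.fromRows_apply_inl, Matrix.fromRows_apply_inr, Matrix.map,
      Fintype.sum_sum_type, mul_comm] using this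
  obtain ⟨hc1, hc2⟩ := hcouple k l hk hl
  constructor
  · have := stmt12_aux n m B (η k)
      (fun i => σ k * ξ k (Sum.inl i)) (fun i => σ k * ξ k (Sum.inr i))
      (fun j => σ k * (σ k * η k j)) (fun j => σ k * (σ l * η l j))
      (hX k) (hY k)
      (fun j => by
        rw [stmt12_pull, stmt12_pull]
        linear_combination σ k * hT k j)
      (fun j => by
        have e1 : ∀ i, ξ k (Sum.inr i) = ξ l (Sum.inl i) := fun i => (hc1 i).symm
        have e2 : ∀ i, ξ k (Sum.inl i) = -ξ l (Sum.inr i) := by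
          intro i; rw [hc2 i]; ring
        simp only [e1, e2]
        rw [stmt12_pull, stmt12_pulln]
        linear_combination σ k * hT l j)
    rw [this]
    funext j
    push_cast
    ring
  · have := stmt12_aux n m B (η l)
      (fun i => σ l * ξ l (Sum.inl i)) (fun i => σ l * ξ l (Sum.inr i))
      (fun j => σ l * (σ l * η l j)) (fun j => σ l * (-(σ k * η k j)))
      (hX l) (hY l)
      (fun j => by
        rw [stmt12_pull, stmt12_pull]
        linear_combination σ l * hT l j)
      (fun j => by
        simp only [hc1, hc2, mul_neg, neg_mul, Finset.sum_neg_distrib]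
        rw [stmt12_pull, stmt12_pull]
        linear_combination (- σ l) * hT k j)
    rw [this]
    funext j
    push_cast
    ring
end

section
/- Let A ∈ ℂ^{n×m} have full row rank n (so A A* is invertible), let L L* = I + A A* with L invertible, and let B = CΩ with C = [L⁻¹, L⁻¹A] and Ω diagonal unitary with block-diagonal structure diag(Ω_x, Ω_y). Then for any e ∈ ℝⁿ (embedded in ℂⁿ), ‖B*B (e,0)‖ ≤ (1/√(1 + s_min(A)²))·‖e‖, where s_min(A) is the smallest singular value of A. -/
open Matrix


open scoped InnerProductSpace in
private lemma stmt17_adj {k l : Type} [Fintype k] [Fintype l] [DecidableEq k] [DecidableEq l]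
    (M : Matrix k l ℂ) (x : EuclideanSpace ℂ k) (y : EuclideanSpace ℂ l) :
    ⟪Matrix.toEuclideanLin Mᴴ x, y⟫_ℂ = ⟪x, Matrix.toEuclideanLin M y⟫_ℂ := by
  rw [Matrix.toEuclideanLin_conjTranspose_eq_adjoint, LinearMap.adjoint_inner_left]

private lemma stmt17_comp {k l p : Type} [Fintype k] [Fintype l] [Fintype p]
    [DecidableEq l] [DecidableEq p]
    (M : Matrix k l ℂ) (N : Matrix l p ℂ) (x : EuclideanSpace ℂ p) :
    Matrix.toEuclideanLin (M * N) x = Matrix.toEuclideanLin M (Matrix.toEuclideanLin N x) := by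
  simp [Matrix.toEuclideanLin_apply, Matrix.mulVec_mulVec]

private lemma stmt17_one {k : Type} [Fintype k] [DecidableEq k] (x : EuclideanSpace ℂ k) :
    Matrix.toEuclideanLin (1 : Matrix k k ℂ) x = x := by
  simp [Matrix.toEuclideanLin_apply, Matrix.one_mulVec]

open scoped InnerProductSpace in
private lemma stmt17_norm_adj {k l : Type} [Fintype k] [Fintype l] [DecidableEq k] [DecidableEq l]
    (M : Matrix k l ℂ) (h : M * Mᴴ = 1) (x : EuclideanSpace ℂ k) :
    ‖Matrix.toEuclideanLin Mᴴ x‖ = ‖x‖ := by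
  have hc : ⟪Matrix.toEuclideanLin Mᴴ x, Matrix.toEuclideanLin Mᴴ x⟫_ℂ = ⟪x, x⟫_ℂ := by
    calc ⟪Matrix.toEuclideanLin Mᴴ x, Matrix.toEuclideanLin Mᴴ x⟫_ℂ
        = ⟪x, Matrix.toEuclideanLin M (Matrix.toEuclideanLin Mᴴ x)⟫_ℂ := stmt17_adj ..
      _ = ⟪x, Matrix.toEuclideanLin (M * Mᴴ) x⟫_ℂ := by rw [stmt17_comp]
      _ = ⟪x, x⟫_ℂ := by rw [h, stmt17_one]
  have h2 : ‖Matrix.toEuclideanLin Mᴴ x‖ ^ 2 = ‖x‖ ^ 2 := by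
    rw [← inner_self_eq_norm_sq (𝕜 := ℂ), ← inner_self_eq_norm_sq (𝕜 := ℂ), hc]
  calc ‖Matrix.toEuclideanLin Mᴴ x‖ = Real.sqrt (‖Matrix.toEuclideanLin Mᴴ x‖ ^ 2) :=
        (Real.sqrt_sq (norm_nonneg _)).symm
    _ = Real.sqrt (‖x‖ ^ 2) := by rw [h2]
    _ = ‖x‖ := Real.sqrt_sq (norm_nonneg _)

open scoped InnerProductSpace in
/-- With `A` of full row rank, `L L* = I + A A*` (`L` invertible), `C = [L⁻¹, L⁻¹A]`,
`Ω = diag(Ω_x, Ω_y)` diagonal unitary and `B = CΩ`, for any real vector `e` (embedded into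
`ℂⁿ` as `(e, 0) ∈ ℂ^{n+m}`), `‖B*B (e,0)‖ ≤ (1/√(1 + s_min(A)²))‖e‖`, where `s_min(A)` is
the smallest singular value of `A` (characterized by `s_min² ‖u‖² ≤ ‖A*u‖²` with equality
attained). -/
theorem stmt17 (n m : ℕ) (A : Matrix (Fin n) (Fin m) ℂ) (hrank : A.rank = n)
    (L : Matrix (Fin n) (Fin n) ℂ) [Invertible L] (hL : L * Lᴴ = 1 + A * Aᴴ)
    (dx : Fin n → ℂ) (hdx : ∀ i, ‖dx i‖ = 1)
    (dy : Fin m → ℂ) (hdy : ∀ i, ‖dy i‖ = 1)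
    (C : Matrix (Fin n) (Fin n ⊕ Fin m) ℂ) (hC : C = Matrix.fromCols L⁻¹ (L⁻¹ * A))
    (Ω : Matrix (Fin n ⊕ Fin m) (Fin n ⊕ Fin m) ℂ)
    (hΩ : Ω = Matrix.fromBlocks (Matrix.diagonal dx) 0 0 (Matrix.diagonal dy))
    (B : Matrix (Fin n) (Fin n ⊕ Fin m) ℂ) (hB : B = C * Ω)
    (smin : ℝ) (hsmin0 : 0 ≤ smin)
    (hsmin1 : ∀ u : EuclideanSpace ℂ (Fin n),
      smin ^ 2 * ‖u‖ ^ 2 ≤ ‖Matrix.toEuclideanLin Aᴴ u‖ ^ 2)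
    (hsmin2 : ∃ u : EuclideanSpace ℂ (Fin n), u ≠ 0 ∧
      smin ^ 2 * ‖u‖ ^ 2 = ‖Matrix.toEuclideanLin Aᴴ u‖ ^ 2)
    (e : EuclideanSpace ℝ (Fin n))
    (v : EuclideanSpace ℂ (Fin n ⊕ Fin m))
    (hv : ∀ j, v j = Sum.elim (fun i => ((e i : ℝ) : ℂ)) (fun _ => (0 : ℂ)) j) :
    ‖Matrix.toEuclideanLin (Bᴴ * B) v‖ ≤ (1 / Real.sqrt (1 + smin ^ 2)) * ‖e‖ := by
  have hc : (0:ℝ) < 1 + smin ^ 2 := by positivity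
  -- step 1 : lower bound for ‖Lᴴ z‖
  have step1 : ∀ z : EuclideanSpace ℂ (Fin n),
      (1 + smin ^ 2) * ‖z‖ ^ 2 ≤ ‖Matrix.toEuclideanLin Lᴴ z‖ ^ 2 := by
    intro z
    have hnorm : ⟪Matrix.toEuclideanLin Lᴴ z, Matrix.toEuclideanLin Lᴴ z⟫_ℂ
        = ⟪z, z⟫_ℂ + ⟪Matrix.toEuclideanLin Aᴴ z, Matrix.toEuclideanLin Aᴴ z⟫_ℂ := by
      calc ⟪Matrix.toEuclideanLin Lᴴ z, Matrix.toEuclideanLin Lᴴ z⟫_ℂ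
          = ⟪z, Matrix.toEuclideanLin L (Matrix.toEuclideanLin Lᴴ z)⟫_ℂ := stmt17_adj ..
        _ = ⟪z, Matrix.toEuclideanLin (L * Lᴴ) z⟫_ℂ := by rw [stmt17_comp]
        _ = ⟪z, Matrix.toEuclideanLin (1 : Matrix (Fin n) (Fin n) ℂ) z
              + Matrix.toEuclideanLin (A * Aᴴ) z⟫_ℂ := by
            rw [hL, map_add Matrix.toEuclideanLin (1 : Matrix (Fin n) (Fin n) ℂ) (A * Aᴴ)]
            rfl
        _ = ⟪z, z⟫_ℂ + ⟪z, Matrix.toEuclideanLin A (Matrix.toEuclideanLin Aᴴ z)⟫_ℂ := by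
            rw [inner_add_right, stmt17_one, stmt17_comp]
        _ = ⟪z, z⟫_ℂ + ⟪Matrix.toEuclideanLin Aᴴ z, Matrix.toEuclideanLin Aᴴ z⟫_ℂ := by
            rw [stmt17_adj]
    have hre : ‖Matrix.toEuclideanLin Lᴴ z‖ ^ 2
        = ‖z‖ ^ 2 + ‖Matrix.toEuclideanLin Aᴴ z‖ ^ 2 := by
      rw [← inner_self_eq_norm_sq (𝕜 := ℂ), ← inner_self_eq_norm_sq (𝕜 := ℂ) (x := z),
        ← inner_self_eq_norm_sq (𝕜 := ℂ) (x := Matrix.toEuclideanLin Aᴴ z), hnorm, map_add]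
    have := hsmin1 z
    nlinarith
  -- step 2 : bound for ‖L⁻¹ u‖
  have step2 : ∀ u : EuclideanSpace ℂ (Fin n),
      ‖Matrix.toEuclideanLin L⁻¹ u‖ ≤ (1 / Real.sqrt (1 + smin ^ 2)) * ‖u‖ := by
    intro u
    set w : EuclideanSpace ℂ (Fin n) := Matrix.toEuclideanLin L⁻¹ u with hwdef
    set z : EuclideanSpace ℂ (Fin n) := Matrix.toEuclideanLin (Lᴴ)⁻¹ w with hzdef
    have hw : Matrix.toEuclideanLin Lᴴ z = w := by
      rw [hzdef, ← stmt17_comp, Matrix.mul_inv_of_invertible, stmt17_one]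
    have hTLw : Matrix.toEuclideanLin L w = u := by
      rw [hwdef, ← stmt17_comp, Matrix.mul_inv_of_invertible, stmt17_one]
    have h1 : (1 + smin ^ 2) * ‖z‖ ^ 2 ≤ ‖w‖ ^ 2 := by
      have := step1 z; rwa [hw] at this
    have h2 : ‖w‖ ^ 2 ≤ ‖z‖ * ‖u‖ := by
      have hiw : ⟪w, w⟫_ℂ = ⟪z, u⟫_ℂ := by
        calc ⟪w, w⟫_ℂ = ⟪Matrix.toEuclideanLin Lᴴ z, w⟫_ℂ := by rw [hw]
          _ = ⟪z, Matrix.toEuclideanLin L w⟫_ℂ := stmt17_adj ..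
          _ = ⟪z, u⟫_ℂ := by rw [hTLw]
      have hre : ‖w‖ ^ 2 = RCLike.re ⟪z, u⟫_ℂ := by rw [← hiw, inner_self_eq_norm_sq]
      rw [hre]
      exact (RCLike.re_le_norm _).trans (norm_inner_le_norm z u)
    have hsc : 0 < Real.sqrt (1 + smin ^ 2) := Real.sqrt_pos.2 hc
    have hs : Real.sqrt (1 + smin ^ 2) * ‖z‖ ≤ ‖w‖ := by
      calc Real.sqrt (1 + smin ^ 2) * ‖z‖ = Real.sqrt ((1 + smin ^ 2) * ‖z‖ ^ 2) := by
            rw [Real.sqrt_mul hc.le, Real.sqrt_sq (norm_nonneg _)]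
        _ ≤ Real.sqrt (‖w‖ ^ 2) := Real.sqrt_le_sqrt h1
        _ = ‖w‖ := Real.sqrt_sq (norm_nonneg _)
    rcases eq_or_lt_of_le (norm_nonneg w) with h0 | h0
    · rw [← h0]; positivity
    · have key : Real.sqrt (1 + smin ^ 2) * ‖w‖ ≤ ‖u‖ := by
        nlinarith [mul_le_mul_of_nonneg_right hs (norm_nonneg u)]
      calc ‖w‖ = (1 / Real.sqrt (1 + smin ^ 2)) * (Real.sqrt (1 + smin ^ 2) * ‖w‖) := by
            field_simp
        _ ≤ (1 / Real.sqrt (1 + smin ^ 2)) * ‖u‖ := by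
            exact mul_le_mul_of_nonneg_left key (by positivity)
  -- matrix identity B * Bᴴ = 1
  have hLinv : (L⁻¹)ᴴ = (Lᴴ)⁻¹ := Matrix.conjTranspose_nonsing_inv L
  have hCC : C * Cᴴ = 1 := by
    rw [hC, Matrix.conjTranspose_fromCols_eq_fromRows_conjTranspose,
      Matrix.fromCols_mul_fromRows]
    rw [Matrix.conjTranspose_mul]
    calc L⁻¹ * L⁻¹ᴴ + L⁻¹ * A * (Aᴴ * L⁻¹ᴴ)
        = L⁻¹ * ((1 + A * Aᴴ) * L⁻¹ᴴ) := by simp [add_mul, mul_add, Matrix.mul_assoc]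
      _ = L⁻¹ * (L * (Lᴴ * L⁻¹ᴴ)) := by rw [← hL, mul_assoc]
      _ = L⁻¹ * L := by rw [hLinv, Matrix.mul_inv_of_invertible, mul_one]
      _ = 1 := Matrix.inv_mul_of_invertible L
  have hΩΩ : Ω * Ωᴴ = 1 := by
    have hx : (fun i => dx i * star (dx i)) = fun _ : Fin n => (1 : ℂ) := by
      funext i
      rw [show star (dx i) = starRingEnd ℂ (dx i) from rfl, Complex.mul_conj, ← Complex.sq_norm,
        hdx, one_pow, Complex.ofReal_one]
    have hy : (fun i => dy i * star (dy i)) = fun _ : Fin m => (1 : ℂ) := by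
      funext i
      rw [show star (dy i) = starRingEnd ℂ (dy i) from rfl, Complex.mul_conj, ← Complex.sq_norm,
        hdy, one_pow, Complex.ofReal_one]
    rw [hΩ, Matrix.fromBlocks_conjTranspose, Matrix.fromBlocks_multiply]
    simp only [Matrix.conjTranspose_zero, Matrix.diagonal_conjTranspose,
      Matrix.mul_zero, Matrix.zero_mul, add_zero, zero_add,
      Matrix.diagonal_mul_diagonal]
    rw [show star dx = fun i => star (dx i) from rfl, show star dy = fun i => star (dy i) from rfl]
    rw [show (fun i => dx i * star (dx i)) = fun _ : Fin n => (1:ℂ) from hx,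
      show (fun i => dy i * star (dy i)) = fun _ : Fin m => (1:ℂ) from hy]
    rw [Matrix.diagonal_one, Matrix.diagonal_one, Matrix.fromBlocks_one]
  have hBB : B * Bᴴ = 1 := by
    rw [hB, Matrix.conjTranspose_mul, Matrix.mul_assoc, ← Matrix.mul_assoc Ω Ωᴴ Cᴴ, hΩΩ,
      Matrix.one_mul, hCC]
  -- the vector computations
  have hveq : v = (WithLp.equiv 2 (Fin n ⊕ Fin m → ℂ)).symm
      (Sum.elim (fun i => ((e i : ℝ) : ℂ)) 0) := by
    ext j
    rw [hv j]
    cases j <;> rfl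
  set u0 : Fin n → ℂ := fun i => dx i * ((e i : ℝ) : ℂ) with hu0
  set u' : EuclideanSpace ℂ (Fin n) := (WithLp.equiv 2 (Fin n → ℂ)).symm u0 with hu'
  have hfinal : Matrix.toEuclideanLin (Bᴴ * B) v
      = Matrix.toEuclideanLin Bᴴ (Matrix.toEuclideanLin L⁻¹ u') := by
    rw [stmt17_comp]
    congr 1
    rw [hB, stmt17_comp, hΩ, hC, hveq, WithLp.equiv_symm_apply,
      Matrix.toEuclideanLin_apply_piLp_toLp (Matrix.fromBlocks (Matrix.diagonal dx) 0 0 (Matrix.diagonal dy))]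
    have hΩv : (Matrix.fromBlocks (Matrix.diagonal dx) 0 0 (Matrix.diagonal dy)) *ᵥ
        (Sum.elim (fun i => ((e i : ℝ) : ℂ)) 0) = Sum.elim u0 0 := by
      rw [Matrix.fromBlocks_mulVec]
      funext j
      cases j with
      | inl i => simp [Matrix.mulVec_diagonal, hu0]
      | inr i => simp
    rw [hΩv, Matrix.toEuclideanLin_apply_piLp_toLp,
      Matrix.fromCols_mulVec_sumElim, Matrix.mulVec_zero, add_zero]
    rfl
  have hu'norm : ‖u'‖ = ‖e‖ := by
    rw [EuclideanSpace.norm_eq, EuclideanSpace.norm_eq]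
    congr 1
    apply Finset.sum_congr rfl
    intro i _
    have : ‖u' i‖ = ‖e i‖ := by
      show ‖dx i * ((e i : ℝ) : ℂ)‖ = ‖e i‖
      rw [norm_mul, hdx, one_mul,
        Complex.norm_real]
    rw [this]
  rw [hfinal, stmt17_norm_adj B hBB]
  exact le_of_le_of_eq (step2 u') (by rw [hu'norm])
end

section
/- Let A ∈ ℂ^{n×m}, L L* = I + A A* with L invertible, C = [L⁻¹, L⁻¹A], and Ω = diag(Ω_x, Ω_y) diagonal unitary; set B = CΩ. For any f ∈ ℂᵐ, ‖B*B (0,f)‖ ≥ ‖Ω_x*(I + A A*)⁻¹ A Ω_y f‖ ≥ (1/(1 + s_max(A)²))·‖A Ω_y f‖, where s_max(A) is the largest singular value of A. -/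
open Matrix

private lemma teLin_apply' {a b : Type*} [Fintype a] [Fintype b] [DecidableEq b]
    (M : Matrix a b ℂ) (x : EuclideanSpace ℂ b) (i : a) :
    Matrix.toEuclideanLin M x i = M.mulVec x i := rfl

private lemma teLin_mul {a b c : Type*} [Fintype a] [Fintype b] [DecidableEq b]
    [Fintype c] [DecidableEq c]
    (M : Matrix a b ℂ) (N : Matrix b c ℂ) (x : EuclideanSpace ℂ c) :
    Matrix.toEuclideanLin (M*N) x = Matrix.toEuclideanLin M (Matrix.toEuclideanLin N x) := by
  simp [Matrix.toEuclideanLin_apply, Matrix.mulVec_mulVec]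

private lemma teLin_one {a : Type*} [Fintype a] [DecidableEq a] (x : EuclideanSpace ℂ a) :
    Matrix.toEuclideanLin (1 : Matrix a a ℂ) x = x := by
  simp [Matrix.toEuclideanLin_apply, Matrix.one_mulVec]

private lemma adj_bound {n m : ℕ} (A : Matrix (Fin n) (Fin m) ℂ) (smax : ℝ) (h0 : 0 ≤ smax)
    (h1 : ∀ u : EuclideanSpace ℂ (Fin m), ‖Matrix.toEuclideanLin A u‖ ≤ smax * ‖u‖)
    (h : EuclideanSpace ℂ (Fin n)) :
    ‖Matrix.toEuclideanLin Aᴴ h‖ ≤ smax * ‖h‖ := by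
  set u := Matrix.toEuclideanLin Aᴴ h with hu
  have hadj : Matrix.toEuclideanLin Aᴴ = LinearMap.adjoint (Matrix.toEuclideanLin A) :=
    Matrix.toEuclideanLin_conjTranspose_eq_adjoint A
  have key : ‖u‖^2 ≤ (smax * ‖h‖) * ‖u‖ := by
    have h2 : (‖u‖:ℝ)^2 = RCLike.re (inner (𝕜 := ℂ) u u) := (inner_self_eq_norm_sq u).symm
    have h3 : (inner (𝕜 := ℂ) u u) = inner (𝕜 := ℂ) h (Matrix.toEuclideanLin A u) := by
      rw [hu, hadj, LinearMap.adjoint_inner_left]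
    calc ‖u‖^2 = RCLike.re (inner (𝕜 := ℂ) h (Matrix.toEuclideanLin A u)) := by rw [h2, h3]
      _ ≤ ‖(inner (𝕜 := ℂ) h (Matrix.toEuclideanLin A u))‖ := RCLike.re_le_norm _
      _ ≤ ‖h‖ * ‖Matrix.toEuclideanLin A u‖ := norm_inner_le_norm _ _
      _ ≤ ‖h‖ * (smax * ‖u‖) := by
          exact mul_le_mul_of_nonneg_left (h1 u) (norm_nonneg h)
      _ = (smax * ‖h‖) * ‖u‖ := by ring
  rcases eq_or_lt_of_le (norm_nonneg u) with h4 | h4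
  · rw [← h4]; positivity
  · have h5 : ‖u‖ * ‖u‖ ≤ (smax * ‖h‖) * ‖u‖ := by nlinarith [key]
    exact le_of_mul_le_mul_right h5 h4

/-- With `L L* = I + A A*` (`L` invertible), `C = [L⁻¹, L⁻¹A]`, `Ω = diag(Ω_x, Ω_y)`
diagonal unitary and `B = CΩ`, for any `f ∈ ℂᵐ`:
`‖B*B (0,f)‖ ≥ ‖Ω_x* (I + A A*)⁻¹ A Ω_y f‖ ≥ (1/(1 + s_max(A)²))‖A Ω_y f‖`, where
`s_max(A)` is the largest singular value of `A` (characterized by `‖A u‖ ≤ s_max ‖u‖` with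
equality attained). -/
theorem stmt18 (n m : ℕ) (A : Matrix (Fin n) (Fin m) ℂ)
    (L : Matrix (Fin n) (Fin n) ℂ) [Invertible L] (hL : L * Lᴴ = 1 + A * Aᴴ)
    (dx : Fin n → ℂ) (hdx : ∀ i, ‖dx i‖ = 1)
    (dy : Fin m → ℂ) (hdy : ∀ i, ‖dy i‖ = 1)
    (C : Matrix (Fin n) (Fin n ⊕ Fin m) ℂ) (hC : C = Matrix.fromCols L⁻¹ (L⁻¹ * A))
    (Ω : Matrix (Fin n ⊕ Fin m) (Fin n ⊕ Fin m) ℂ)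
    (hΩ : Ω = Matrix.fromBlocks (Matrix.diagonal dx) 0 0 (Matrix.diagonal dy))
    (B : Matrix (Fin n) (Fin n ⊕ Fin m) ℂ) (hB : B = C * Ω)
    (smax : ℝ) (hsmax0 : 0 ≤ smax)
    (hsmax1 : ∀ u : EuclideanSpace ℂ (Fin m),
      ‖Matrix.toEuclideanLin A u‖ ≤ smax * ‖u‖)
    (hsmax2 : ∃ u : EuclideanSpace ℂ (Fin m), u ≠ 0 ∧
      ‖Matrix.toEuclideanLin A u‖ = smax * ‖u‖)
    (f : EuclideanSpace ℂ (Fin m))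
    (v : EuclideanSpace ℂ (Fin n ⊕ Fin m))
    (hv : ∀ j, v j = Sum.elim (fun _ => (0 : ℂ)) f j) :
    ‖Matrix.toEuclideanLin ((Matrix.diagonal dx)ᴴ * (1 + A * Aᴴ)⁻¹ * A * Matrix.diagonal dy) f‖ ≤
      ‖Matrix.toEuclideanLin (Bᴴ * B) v‖ ∧
    (1 / (1 + smax ^ 2)) * ‖Matrix.toEuclideanLin (A * Matrix.diagonal dy) f‖ ≤
      ‖Matrix.toEuclideanLin ((Matrix.diagonal dx)ᴴ * (1 + A * Aᴴ)⁻¹ * A * Matrix.diagonal dy) f‖ := by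
  classical
  set Dx := Matrix.diagonal dx with hDx
  set Dy := Matrix.diagonal dy with hDy
  set M : Matrix (Fin n) (Fin n) ℂ := 1 + A * Aᴴ with hM
  have hMinvble : Invertible M := hL ▸ (invertibleMul L Lᴴ)
  have hMinv_eq : M⁻¹ = (L⁻¹)ᴴ * L⁻¹ := by
    rw [← hL, Matrix.mul_inv_rev, Matrix.conjTranspose_nonsing_inv]
  -- the vector equality
  have hv2 : (v : Fin n ⊕ Fin m → ℂ) = Sum.elim (fun _ => (0:ℂ)) f := funext hv
  have hBv : B *ᵥ (v : Fin n ⊕ Fin m → ℂ) = (L⁻¹ * A * Dy) *ᵥ (f : Fin m → ℂ) := by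
    rw [hB, hΩ, hC, ← Matrix.mulVec_mulVec, hv2, Matrix.fromBlocks_mulVec]
    simp [Matrix.mulVec_mulVec, show (fun _ : Fin n => (0:ℂ)) = 0 from rfl]
  have hfirst : ∀ i, ((Bᴴ*B) *ᵥ (v : Fin n ⊕ Fin m → ℂ)) (Sum.inl i)
      = ((Dxᴴ * M⁻¹ * A * Dy) *ᵥ (f : Fin m → ℂ)) i := by
    intro i
    rw [← Matrix.mulVec_mulVec, hBv, hB, Matrix.conjTranspose_mul, hΩ, hC,
      Matrix.conjTranspose_fromCols_eq_fromRows_conjTranspose,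
      Matrix.fromBlocks_conjTranspose, ← Matrix.mulVec_mulVec,
      Matrix.fromRows_mulVec, Matrix.fromBlocks_mulVec, hMinv_eq]
    simp [Matrix.mulVec_mulVec, Matrix.mul_assoc]
  constructor
  · -- first inequality
    rw [EuclideanSpace.norm_eq, EuclideanSpace.norm_eq]
    apply Real.sqrt_le_sqrt
    calc ∑ i, ‖(Matrix.toEuclideanLin (Dxᴴ * M⁻¹ * A * Dy) f) i‖^2
        = ∑ i, ‖(Matrix.toEuclideanLin (Bᴴ*B) v) (Sum.inl i)‖^2 := by
          refine Finset.sum_congr rfl fun i _ => ?_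
          rw [teLin_apply', teLin_apply', hfirst i]
      _ ≤ ∑ i, ‖(Matrix.toEuclideanLin (Bᴴ*B) v) (Sum.inl i)‖^2
            + ∑ i, ‖(Matrix.toEuclideanLin (Bᴴ*B) v) (Sum.inr i)‖^2 := le_add_of_nonneg_right (by positivity)
      _ = ∑ j, ‖(Matrix.toEuclideanLin (Bᴴ*B) v) j‖^2 := by rw [Fintype.sum_sum_type]
  · -- second inequality
    set gE : EuclideanSpace ℂ (Fin n) := Matrix.toEuclideanLin (A * Dy) f with hgE
    set hE : EuclideanSpace ℂ (Fin n) := Matrix.toEuclideanLin M⁻¹ gE with hhE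
    have htE : Matrix.toEuclideanLin (Dxᴴ * M⁻¹ * A * Dy) f = Matrix.toEuclideanLin Dxᴴ hE := by
      rw [show Dxᴴ * M⁻¹ * A * Dy = Dxᴴ * (M⁻¹ * (A * Dy)) by
        simp [Matrix.mul_assoc], teLin_mul, teLin_mul]
    have hnt : ‖Matrix.toEuclideanLin Dxᴴ hE‖ = ‖hE‖ := by
      rw [EuclideanSpace.norm_eq, EuclideanSpace.norm_eq]
      congr 1
      refine Finset.sum_congr rfl fun i _ => ?_
      have hc : (Matrix.toEuclideanLin Dxᴴ hE) i = (star (dx i)) * hE i := by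
        rw [teLin_apply', hDx, Matrix.diagonal_conjTranspose, Matrix.mulVec_diagonal]
        rfl
      rw [hc, norm_mul]
      have : ‖star (dx i)‖ = 1 := by
        rw [norm_star, hdx i]
      rw [this, one_mul]
    have hMg : Matrix.toEuclideanLin M hE = gE := by
      rw [hhE, ← teLin_mul, Matrix.mul_nonsing_inv _ (Matrix.isUnit_det_of_invertible M),
        teLin_one]
    have hT : Matrix.toEuclideanLin M hE
        = hE + Matrix.toEuclideanLin A (Matrix.toEuclideanLin Aᴴ hE) := by
      rw [hM, map_add, LinearMap.add_apply, teLin_one, teLin_mul]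
    have hgnorm : ‖gE‖ ≤ (1 + smax^2) * ‖hE‖ := by
      have h6 : ‖Matrix.toEuclideanLin Aᴴ hE‖ ≤ smax * ‖hE‖ :=
        adj_bound A smax hsmax0 hsmax1 hE
      have h7 : ‖Matrix.toEuclideanLin A (Matrix.toEuclideanLin Aᴴ hE)‖
          ≤ smax * (smax * ‖hE‖) := by
        calc ‖Matrix.toEuclideanLin A (Matrix.toEuclideanLin Aᴴ hE)‖
            ≤ smax * ‖Matrix.toEuclideanLin Aᴴ hE‖ := hsmax1 _
          _ ≤ smax * (smax * ‖hE‖) := mul_le_mul_of_nonneg_left h6 hsmax0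
      calc ‖gE‖ = ‖hE + Matrix.toEuclideanLin A (Matrix.toEuclideanLin Aᴴ hE)‖ := by
            rw [← hMg, hT]
        _ ≤ ‖hE‖ + ‖Matrix.toEuclideanLin A (Matrix.toEuclideanLin Aᴴ hE)‖ := norm_add_le _ _
        _ ≤ ‖hE‖ + smax * (smax * ‖hE‖) := by linarith
        _ = (1 + smax^2) * ‖hE‖ := by ring
    have hpos : (0:ℝ) < 1 + smax^2 := by positivity
    rw [htE, hnt, one_div, inv_mul_le_iff₀ hpos]
    exact hgnorm
end
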